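/- Suppose that W₁₃ commutes with W''₁₂. Let X be a bounded operator on H and let ξ, η, ζ ∈ H be unit vectors. Then |⟨(1⊗1⊗X) W₂₃W₁₂W''₁₂(ξ⊗η⊗ζ), W₂₃W₁₂W''₁₂(ξ⊗η⊗ζ)⟩ − ⟨Xζ, ζ⟩| ≤ 2‖X‖ ( ‖WW'*(ξ⊗ζ) − ξ⊗ζ‖ + ‖W₂₃W'₁₃*(ξ⊗η⊗ζ) − W'₁₃*(ξ⊗η⊗ζ)‖ ). -/

import Mathlib

/-!
Conjugating the pentagon equation `W₁₂ W₁₃ W₂₃ = W₂₃ W₁₂` by the antiunitary `J ⊗ Ĵ ⊗ J` and using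
`W* = (Ĵ ⊗ J) W (Ĵ ⊗ J)` gives `W''₁₂ W'₁₃ W*₂₃ = W*₂₃ W''₁₂`. Together with the pentagon equation
and `[W₁₃, W''₁₂] = 0` this factors `W₂₃ W₁₂ W''₁₂ = (W W'')₁₂ · W₁₃ W₂₃ W'*₁₃`. The unitary
`(W W'')₁₂` commutes with `1 ⊗ 1 ⊗ X` and drops out of the matrix coefficient, which then differs
from `⟨X ζ, ζ⟩` by at most `2 ‖X‖ ‖W₁₃ W₂₃ W'*₁₃ v - v‖` for `v = ξ ⊗ η ⊗ ζ`. The triangle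
inequality through `W₁₃ W'*₁₃ v = (W W'*)₁₃ v` splits this distance into the two terms.

No antiunitary `J ⊗ Ĵ ⊗ J` on `H ⊗ H ⊗ H` is given, so the conjugation is carried out on matrix
coefficients between elementary tensors and extended by density.
-/

open scoped InnerProductSpace

section Hilbert

variable {E F G G' : Type*}
  [NormedAddCommGroup E] [InnerProductSpace ℂ E] [NormedAddCommGroup F] [InnerProductSpace ℂ F]
  [NormedAddCommGroup G] [InnerProductSpace ℂ G] [NormedAddCommGroup G'] [InnerProductSpace ℂ G']

theorem eq_of_inner_left_of_dense_span {t : Set F} (ht : Dense (Submodule.span ℂ t : Set F))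
    {x y : F} (h : ∀ v ∈ t, ⟪x, v⟫_ℂ = ⟪y, v⟫_ℂ) : x = y := by
  refine ht.eq_of_inner_left ℂ fun v hv => ?_
  have hspan : Submodule.span ℂ t ≤ LinearMap.ker (innerₛₗ ℂ (x - y)) :=
    Submodule.span_le.mpr fun v hv => by simp [h v hv]
  simpa [inner_sub_left, sub_eq_zero] using hspan hv

theorem ContinuousLinearMap.ext_inner_of_dense_span {s : Set E} {t : Set F}
    (hs : Dense (Submodule.span ℂ s : Set E)) (ht : Dense (Submodule.span ℂ t : Set F))
    {A B : E →L[ℂ] F} (h : ∀ x ∈ s, ∀ y ∈ t, ⟪A x, y⟫_ℂ = ⟪B x, y⟫_ℂ) : A = B :=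
  ContinuousLinearMap.ext_on hs fun x hx => eq_of_inner_left_of_dense_span ht (h x hx)

theorem LinearIsometry.inner_map_map_conj (K : E →ₗᵢ⋆[ℂ] F) (x y : E) :
    ⟪K x, K y⟫_ℂ = ⟪y, x⟫_ℂ := by
  have hI : ∀ z, K (Complex.I • z) = -(Complex.I • K z) := fun z => by
    rw [K.map_smulₛₗ]; simp [Complex.conj_I]
  have h1 : ‖K x + K y‖ = ‖y + x‖ := by rw [← map_add, K.norm_map, add_comm]
  have h2 : ‖K x - K y‖ = ‖y - x‖ := by rw [← map_sub, K.norm_map, norm_sub_rev]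
  have h3 : ‖K x - Complex.I • K y‖ = ‖y - Complex.I • x‖ := by
    have e : y - Complex.I • x = (-Complex.I) • (x + Complex.I • y) := by
      rw [smul_add, smul_smul]; simp [sub_eq_neg_add]
    rw [e, norm_smul, ← K.norm_map, map_add, hI]; simp [sub_eq_add_neg]
  have h4 : ‖K x + Complex.I • K y‖ = ‖y + Complex.I • x‖ := by
    have e : y + Complex.I • x = Complex.I • (x - Complex.I • y) := by
      rw [smul_sub, smul_smul]; simp [add_comm]
    rw [e, norm_smul, ← K.norm_map, map_sub, hI]; simp
  rw [inner_eq_sum_norm_sq_div_four, inner_eq_sum_norm_sq_div_four, RCLike.I_to_complex,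
    h1, h2, h3, h4]

theorem LinearIsometry.inner_map_right_swap (K : F →ₗᵢ⋆[ℂ] F) (hK : Function.Involutive K)
    (x y : F) : ⟪x, K y⟫_ℂ = ⟪y, K x⟫_ℂ := by
  conv_lhs => rw [← hK x]
  exact K.inner_map_map_conj _ _

theorem LinearIsometry.inner_map_left_swap (K : F →ₗᵢ⋆[ℂ] F) (hK : Function.Involutive K)
    (x y : F) : ⟪K x, y⟫_ℂ = ⟪K y, x⟫_ℂ := by
  conv_lhs => rw [← hK y]
  exact K.inner_map_map_conj _ _

theorem norm_eq_mul_of_inner_self {x : E} {y : F} {z : G}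
    (h : ⟪x, x⟫_ℂ = ⟪y, y⟫_ℂ * ⟪z, z⟫_ℂ) : ‖x‖ = ‖y‖ * ‖z‖ := by
  simp only [inner_self_eq_norm_sq_to_K] at h
  have h' : ‖x‖ ^ 2 = (‖y‖ * ‖z‖) ^ 2 := by rw [mul_pow]; exact_mod_cast h
  exact (pow_left_inj₀ (norm_nonneg _) (by positivity) two_ne_zero).mp h'

theorem norm_inner_sub_inner_le (T : E →L[ℂ] E) {x y : E} (hx : ‖x‖ = 1) (hy : ‖y‖ = 1) :
    ‖⟪T x, x⟫_ℂ - ⟪T y, y⟫_ℂ‖ ≤ 2 * ‖T‖ * ‖x - y‖ := by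
  have hsplit : ⟪T x, x⟫_ℂ - ⟪T y, y⟫_ℂ = ⟪T (x - y), x⟫_ℂ + ⟪T y, x - y⟫_ℂ := by
    simp only [map_sub, inner_sub_left, inner_sub_right]; ring
  have h₁ : ‖⟪T (x - y), x⟫_ℂ‖ ≤ ‖T‖ * ‖x - y‖ :=
    calc ‖⟪T (x - y), x⟫_ℂ‖ ≤ ‖T (x - y)‖ * ‖x‖ := norm_inner_le_norm _ _
      _ ≤ ‖T‖ * ‖x - y‖ := by rw [hx, mul_one]; exact T.le_opNorm _
  have h₂ : ‖⟪T y, x - y⟫_ℂ‖ ≤ ‖T‖ * ‖x - y‖ :=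
    calc ‖⟪T y, x - y⟫_ℂ‖ ≤ ‖T y‖ * ‖x - y‖ := norm_inner_le_norm _ _
      _ ≤ ‖T‖ * ‖x - y‖ := by gcongr; simpa [hy] using T.le_opNorm y
  rw [hsplit]
  linarith [norm_add_le ⟪T (x - y), x⟫_ℂ ⟪T y, x - y⟫_ℂ]

theorem inner_map_conj_eq_of_dense_span [CompleteSpace F] [CompleteSpace G] [CompleteSpace G']
    {s : Set E} {t : Set F} (hs : Dense (Submodule.span ℂ s : Set E))
    (ht : Dense (Submodule.span ℂ t : Set F))
    (KE : E →ₗᵢ⋆[ℂ] E) (KF : F →ₗᵢ⋆[ℂ] F) (hKF : Function.Involutive KF)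
    (A : E →L[ℂ] G) (C : F →L[ℂ] G) (B : E →L[ℂ] G') (D : F →L[ℂ] G')
    (h : ∀ x ∈ s, ∀ y ∈ t, ⟪A (KE x), C (KF y)⟫_ℂ = ⟪D y, B x⟫_ℂ) (x : E) (y : F) :
    ⟪A (KE x), C (KF y)⟫_ℂ = ⟪D y, B x⟫_ℂ := by
  let M : E →L[ℂ] F :=
    KF.toContinuousLinearMap.comp ((C.adjoint ∘L A).comp KE.toContinuousLinearMap)
  have hM : ∀ x y, ⟪A (KE x), C (KF y)⟫_ℂ = ⟪y, M x⟫_ℂ := fun x y => by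
    rw [← ContinuousLinearMap.adjoint_inner_left, KF.inner_map_right_swap hKF]; rfl
  have hDB : ∀ x y, ⟪D y, B x⟫_ℂ = ⟪y, (D.adjoint ∘L B) x⟫_ℂ := fun x y =>
    (ContinuousLinearMap.adjoint_inner_right D y (B x)).symm
  have hMDB : M = D.adjoint ∘L B :=
    ContinuousLinearMap.ext_inner_of_dense_span hs ht fun x hx y hy => by
      rw [← inner_conj_symm, ← hM, h x hx y hy, hDB, inner_conj_symm]
  rw [hM, hDB, hMDB]

variable [CompleteSpace E]

theorem ContinuousLinearMap.star_apply_of_conj (K : E →ₗᵢ⋆[ℂ] E) (hK : Function.Involutive K)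
    {A B : E →L[ℂ] E} (hB : ∀ x, B x = K (A (K x))) (x : E) :
    star B x = K (star A (K x)) := by
  refine ext_inner_left ℂ fun y => ?_
  rw [star_eq_adjoint, adjoint_inner_right, hB, K.inner_map_left_swap hK, ← adjoint_inner_left,
    K.inner_map_right_swap hK, star_eq_adjoint]

theorem ContinuousLinearMap.mem_unitary_of_conj (K : E →ₗᵢ⋆[ℂ] E) (hK : Function.Involutive K)
    {A B : E →L[ℂ] E} (hA : A ∈ unitary (E →L[ℂ] E)) (hB : ∀ x, B x = K (A (K x))) :
    B ∈ unitary (E →L[ℂ] E) := by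
  have hA₁ : ∀ x, star A (A x) = x := fun x => by
    rw [← mul_apply_eq_comp, Unitary.star_mul_self_of_mem hA, one_apply_eq_self]
  have hA₂ : ∀ x, A (star A x) = x := fun x => by
    rw [← mul_apply_eq_comp, Unitary.mul_star_self_of_mem hA, one_apply_eq_self]
  refine Unitary.mem_iff.mpr ⟨ext fun x => ?_, ext fun x => ?_⟩
  · rw [mul_apply_eq_comp, star_apply_of_conj K hK hB, hB, hK, hA₁, hK, one_apply_eq_self]
  · rw [mul_apply_eq_comp, star_apply_of_conj K hK hB, hB, hK, hA₂, hK, one_apply_eq_self]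

theorem ContinuousLinearMap.star_eq_of_dense_span {s : Set E}
    (hs : Dense (Submodule.span ℂ s : Set E)) {A B : E →L[ℂ] E}
    (h : ∀ x ∈ s, ∀ y ∈ s, ⟪A x, y⟫_ℂ = ⟪x, B y⟫_ℂ) : star B = A :=
  ext_inner_of_dense_span hs hs fun x hx y hy => by
    rw [star_eq_adjoint, adjoint_inner_left, h x hx y hy]

theorem norm_apply_apply_sub_le {Q R : E →L[ℂ] E} (hQ : Q ∈ unitary (E →L[ℂ] E)) (u v : E) :
    ‖Q (R u) - v‖ ≤ ‖Q u - v‖ + ‖R u - u‖ := by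
  calc ‖Q (R u) - v‖ ≤ ‖Q (R u) - Q u‖ + ‖Q u - v‖ := norm_sub_le_norm_sub_add_norm_sub _ _ _
    _ = ‖Q u - v‖ + ‖R u - u‖ := by
      rw [← map_sub, Q.norm_map_of_mem_unitary hQ, add_comm]

theorem norm_inner_unitary_conj_sub_le {X D Y : E →L[ℂ] E} (hD : D ∈ unitary (E →L[ℂ] E))
    (hXD : Commute X D) (hY : Y ∈ unitary (E →L[ℂ] E)) {v : E} (hv : ‖v‖ = 1) :
    ‖⟪X (D (Y v)), D (Y v)⟫_ℂ - ⟪X v, v⟫_ℂ‖ ≤ 2 * ‖X‖ * ‖Y v - v‖ := by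
  have hXDY : X (D (Y v)) = D (X (Y v)) := by rw [← mul_apply_eq_comp, hXD.eq, mul_apply_eq_comp]
  rw [hXDY, D.inner_map_map_of_mem_unitary hD]
  exact norm_inner_sub_inner_le X (by rw [Y.norm_map_of_mem_unitary hY, hv]) hv

end Hilbert

theorem mem_unitary_of_starMonoidHom {R S : Type*} [Monoid R] [StarMul R] [Monoid S] [StarMul S]
    (f : R → S) (hone : f 1 = 1) (hmul : ∀ x y, f (x * y) = f x * f y)
    (hstar : ∀ x, f (star x) = star (f x)) {u : R} (hu : u ∈ unitary R) : f u ∈ unitary S :=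
  Unitary.map_mem ({ toFun := f, map_one' := hone, map_mul' := hmul, map_star' := hstar } :
    R →⋆* S) hu

theorem mul_mul_eq_of_pentagon {M : Type*} [Monoid M] [StarMul M] {a b c e f : M}
    (hc : c ∈ unitary M) (hf : f ∈ unitary M) (hpent : a * b * c = c * a)
    (hconj : e * f * star c = star c * e) (hbe : Commute b e) :
    c * a * e = a * e * (b * c * star f) := by
  have hce : c * e = e * c * star f := by
    calc c * e = c * (e * f * star c) * c * star f := by
          simp only [mul_assoc, Unitary.star_mul_self_of_mem hc, Unitary.mul_star_self_of_mem hf,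
            mul_one]
      _ = e * c * star f := by
          rw [hconj, ← mul_assoc, Unitary.mul_star_self_of_mem hc, one_mul]
  calc c * a * e = a * b * (c * e) := by rw [← hpent, mul_assoc]
    _ = a * e * (b * c * star f) := by
        rw [hce]; simp only [← mul_assoc]; rw [mul_assoc a b e, hbe.eq, ← mul_assoc]

section Tensor

variable {H H2 H3 : Type*} [NormedAddCommGroup H] [InnerProductSpace ℂ H]
  [NormedAddCommGroup H2] [InnerProductSpace ℂ H2] [NormedAddCommGroup H3] [InnerProductSpace ℂ H3]

/-- `H2` and `H3` stand for `H ⊗ H` and `H ⊗ H ⊗ H`, with `τ a b = a ⊗ b`, `m u c = u ⊗ c` and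
`m' a v = a ⊗ v`. -/
structure IsTripleTensor (τ : H →L[ℂ] H →L[ℂ] H2) (m : H2 →L[ℂ] H →L[ℂ] H3)
    (m' : H →L[ℂ] H2 →L[ℂ] H3) : Prop where
  inner_tmul : ∀ a b c d : H, ⟪τ a b, τ c d⟫_ℂ = ⟪a, c⟫_ℂ * ⟪b, d⟫_ℂ
  dense_tmul : Dense (Submodule.span ℂ (Set.range fun p : H × H => τ p.1 p.2) : Set H2)
  assoc : ∀ a b c : H, m (τ a b) c = m' a (τ b c)
  inner_m : ∀ (u v : H2) (c d : H), ⟪m u c, m v d⟫_ℂ = ⟪u, v⟫_ℂ * ⟪c, d⟫_ℂ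
  dense_m : Dense (Submodule.span ℂ
    (Set.range fun p : (H × H) × H => m (τ p.1.1 p.1.2) p.2) : Set H3)

namespace IsTripleTensor

variable {τ : H →L[ℂ] H →L[ℂ] H2} {m : H2 →L[ℂ] H →L[ℂ] H3} {m' : H →L[ℂ] H2 →L[ℂ] H3}

theorem ext₂ (T : IsTripleTensor τ m m') {F : Type*} [NormedAddCommGroup F] [NormedSpace ℂ F]
    {A B : H2 →L[ℂ] F} (h : ∀ a b, A (τ a b) = B (τ a b)) : A = B :=
  ContinuousLinearMap.ext_on T.dense_tmul <| by rintro _ ⟨⟨a, b⟩, rfl⟩; exact h a b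

theorem ext₃ (T : IsTripleTensor τ m m') {F : Type*} [NormedAddCommGroup F] [NormedSpace ℂ F]
    {A B : H3 →L[ℂ] F} (h : ∀ a b c, A (m (τ a b) c) = B (m (τ a b) c)) : A = B :=
  ContinuousLinearMap.ext_on T.dense_m <| by rintro _ ⟨⟨⟨a, b⟩, c⟩, rfl⟩; exact h a b c

theorem ext_inner₃ (T : IsTripleTensor τ m m') {A B : H3 →L[ℂ] H3}
    (h : ∀ a b c a' b' c', ⟪A (m (τ a b) c), m (τ a' b') c'⟫_ℂ
      = ⟪B (m (τ a b) c), m (τ a' b') c'⟫_ℂ) : A = B :=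
  ContinuousLinearMap.ext_inner_of_dense_span T.dense_m T.dense_m <| by
    rintro _ ⟨⟨⟨a, b⟩, c⟩, rfl⟩ _ ⟨⟨⟨a', b'⟩, c'⟩, rfl⟩; exact h a b c a' b' c'

theorem star_eq₃ [CompleteSpace H3] (T : IsTripleTensor τ m m') {A B : H3 →L[ℂ] H3}
    (h : ∀ a b c a' b' c', ⟪A (m (τ a b) c), m (τ a' b') c'⟫_ℂ
      = ⟪m (τ a b) c, B (m (τ a' b') c')⟫_ℂ) : star B = A :=
  ContinuousLinearMap.star_eq_of_dense_span T.dense_m <| by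
    rintro _ ⟨⟨⟨a, b⟩, c⟩, rfl⟩ _ ⟨⟨⟨a', b'⟩, c'⟩, rfl⟩; exact h a b c a' b' c'

theorem inner_m_tmul (T : IsTripleTensor τ m m') (a b c a' b' c' : H) :
    ⟪m (τ a b) c, m (τ a' b') c'⟫_ℂ = ⟪a, a'⟫_ℂ * ⟪b, b'⟫_ℂ * ⟪c, c'⟫_ℂ := by
  rw [T.inner_m, T.inner_tmul]

theorem inner_m' [CompleteSpace H2] [CompleteSpace H3] (T : IsTripleTensor τ m m')
    (a a' : H) (z z' : H2) :
    ⟪m' a z, m' a' z'⟫_ℂ = ⟪a, a'⟫_ℂ * ⟪z, z'⟫_ℂ := by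
  have h : (m' a').adjoint ∘L m' a = ⟪a', a⟫_ℂ • 1 :=
    ContinuousLinearMap.ext_inner_of_dense_span T.dense_tmul T.dense_tmul <| by
      rintro _ ⟨⟨b, c⟩, rfl⟩ _ ⟨⟨b', c'⟩, rfl⟩
      simp only [ContinuousLinearMap.comp_apply, ContinuousLinearMap.adjoint_inner_left,
        smul_apply, one_apply_eq_self, inner_smul_left, inner_conj_symm, ← T.assoc,
        T.inner_m_tmul, T.inner_tmul]
      ring
  rw [← ContinuousLinearMap.adjoint_inner_left, ← ContinuousLinearMap.comp_apply, h, smul_apply,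
    one_apply_eq_self, inner_smul_left, inner_conj_symm]

theorem norm_m' [CompleteSpace H2] [CompleteSpace H3] (T : IsTripleTensor τ m m') (a : H)
    (z : H2) : ‖m' a z‖ = ‖a‖ * ‖z‖ :=
  norm_eq_mul_of_inner_self (T.inner_m' a a z z)

theorem norm_m_tmul (T : IsTripleTensor τ m m') (a b c : H) : ‖m (τ a b) c‖ = ‖a‖ * ‖b‖ * ‖c‖ := by
  rw [norm_eq_mul_of_inner_self (T.inner_m _ _ c c),
    norm_eq_mul_of_inner_self (T.inner_tmul a b a b)]

/-- An amplification `S ↦ 1 ⊗ S` is a `⋆`-homomorphism of C⋆-algebras, hence contractive. -/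
theorem norm_amplify_le [CompleteSpace H] [CompleteSpace H2] [CompleteSpace H3]
    (T : IsTripleTensor τ m m') {Φ : (H →L[ℂ] H) → (H3 →L[ℂ] H3)}
    (hΦ : ∀ (S : H →L[ℂ] H) (u : H2) (c : H), Φ S (m u c) = m u (S c)) (S : H →L[ℂ] H) :
    ‖Φ S‖ ≤ ‖S‖ :=
  let φ : (H →L[ℂ] H) →⋆ₙₐ[ℂ] (H3 →L[ℂ] H3) :=
    { toFun := Φ
      map_smul' := fun r S => T.ext₃ fun a b c => by simp [hΦ]
      map_zero' := T.ext₃ fun a b c => by simp [hΦ]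
      map_add' := fun S S' => T.ext₃ fun a b c => by simp [hΦ]
      map_mul' := fun S S' => T.ext₃ fun a b c => by simp [hΦ]
      map_star' := fun S => (T.star_eq₃ (A := Φ (star S)) (B := Φ S) fun a b c a' b' c' => by
        simp only [hΦ, T.inner_m, ContinuousLinearMap.star_eq_adjoint,
          ContinuousLinearMap.adjoint_inner_left]).symm }
  NonUnitalStarAlgHom.norm_apply_le φ S

theorem inner_m_conj_m' [CompleteSpace H2] [CompleteSpace H3] (T : IsTripleTensor τ m m')
    {J Jh : H →ₗᵢ⋆[ℂ] H} (hJ : Function.Involutive J) {JJh JhJ : H2 →ₗᵢ⋆[ℂ] H2}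
    (hJhJ : Function.Involutive JhJ) (hJJh_tmul : ∀ a b, JJh (τ a b) = τ (J a) (Jh b))
    (hJhJ_tmul : ∀ a b, JhJ (τ a b) = τ (Jh a) (J b)) (a c : H) (w z : H2) :
    ⟪m (JJh w) c, m' a (JhJ z)⟫_ℂ = ⟪m' (J a) z, m w (J c)⟫_ℂ :=
  inner_map_conj_eq_of_dense_span T.dense_tmul T.dense_tmul JJh JhJ hJhJ (m.flip c) (m' a)
    (m.flip (J c)) (m' (J a)) (by
      rintro _ ⟨⟨p, q⟩, rfl⟩ _ ⟨⟨p', q'⟩, rfl⟩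
      simp only [ContinuousLinearMap.flip_apply, hJJh_tmul, hJhJ_tmul, ← T.assoc,
        T.inner_m_tmul]
      rw [J.inner_map_left_swap hJ, Jh.inner_map_map_conj, J.inner_map_right_swap hJ]) w z

end IsTripleTensor

/-- `leg12 T = T ⊗ 1`, `leg23 T = 1 ⊗ T` and `leg13 T = Σ₁₂ (1 ⊗ T) Σ₁₂`, where `Sg` is the flip. -/
structure IsLegMaps (τ : H →L[ℂ] H →L[ℂ] H2) (m : H2 →L[ℂ] H →L[ℂ] H3) (m' : H →L[ℂ] H2 →L[ℂ] H3)
    (leg12 leg23 leg13 : (H2 →L[ℂ] H2) → (H3 →L[ℂ] H3)) (Sg : H2 →L[ℂ] H2) : Prop where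
  leg12_apply : ∀ (S : H2 →L[ℂ] H2) (u : H2) (c : H), leg12 S (m u c) = m (S u) c
  leg23_apply : ∀ (S : H2 →L[ℂ] H2) (a : H) (v : H2), leg23 S (m' a v) = m' a (S v)
  flip_tmul : ∀ a b : H, Sg (τ a b) = τ b a
  leg13_eq : ∀ S : H2 →L[ℂ] H2, leg13 S = leg12 Sg * leg23 S * leg12 Sg

namespace IsLegMaps

variable {τ : H →L[ℂ] H →L[ℂ] H2} {m : H2 →L[ℂ] H →L[ℂ] H3} {m' : H →L[ℂ] H2 →L[ℂ] H3}
  {leg12 leg23 leg13 : (H2 →L[ℂ] H2) → (H3 →L[ℂ] H3)} {Sg : H2 →L[ℂ] H2}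

theorem leg12_one (L : IsLegMaps τ m m' leg12 leg23 leg13 Sg) (T : IsTripleTensor τ m m') :
    leg12 1 = 1 :=
  T.ext₃ fun a b c => by rw [L.leg12_apply, one_apply_eq_self, one_apply_eq_self]

theorem leg12_mul (L : IsLegMaps τ m m' leg12 leg23 leg13 Sg) (T : IsTripleTensor τ m m')
    (S S' : H2 →L[ℂ] H2) : leg12 (S * S') = leg12 S * leg12 S' :=
  T.ext₃ fun a b c => by simp only [mul_apply_eq_comp, L.leg12_apply]

theorem star_leg12 [CompleteSpace H2] [CompleteSpace H3]
    (L : IsLegMaps τ m m' leg12 leg23 leg13 Sg) (T : IsTripleTensor τ m m') (S : H2 →L[ℂ] H2) :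
    star (leg12 S) = leg12 (star S) :=
  T.star_eq₃ fun a b c a' b' c' => by
    rw [L.leg12_apply, L.leg12_apply, T.inner_m, T.inner_m, ContinuousLinearMap.star_eq_adjoint,
      ContinuousLinearMap.adjoint_inner_left]

theorem leg23_one (L : IsLegMaps τ m m' leg12 leg23 leg13 Sg) (T : IsTripleTensor τ m m') :
    leg23 1 = 1 :=
  T.ext₃ fun a b c => by rw [T.assoc, L.leg23_apply, one_apply_eq_self, one_apply_eq_self]

theorem leg23_mul (L : IsLegMaps τ m m' leg12 leg23 leg13 Sg) (T : IsTripleTensor τ m m')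
    (S S' : H2 →L[ℂ] H2) : leg23 (S * S') = leg23 S * leg23 S' :=
  T.ext₃ fun a b c => by simp only [T.assoc, mul_apply_eq_comp, L.leg23_apply]

theorem star_leg23 [CompleteSpace H2] [CompleteSpace H3]
    (L : IsLegMaps τ m m' leg12 leg23 leg13 Sg) (T : IsTripleTensor τ m m') (S : H2 →L[ℂ] H2) :
    star (leg23 S) = leg23 (star S) :=
  T.star_eq₃ fun a b c a' b' c' => by
    rw [T.assoc, T.assoc, L.leg23_apply, L.leg23_apply, T.inner_m', T.inner_m',
      ContinuousLinearMap.star_eq_adjoint, ContinuousLinearMap.adjoint_inner_left]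

theorem flip_mul_self (L : IsLegMaps τ m m' leg12 leg23 leg13 Sg) (T : IsTripleTensor τ m m') :
    Sg * Sg = 1 :=
  T.ext₂ fun a b => by rw [mul_apply_eq_comp, L.flip_tmul, L.flip_tmul, one_apply_eq_self]

theorem star_flip [CompleteSpace H2] (L : IsLegMaps τ m m' leg12 leg23 leg13 Sg)
    (T : IsTripleTensor τ m m') : star Sg = Sg :=
  ContinuousLinearMap.star_eq_of_dense_span T.dense_tmul <| by
    rintro _ ⟨⟨a, b⟩, rfl⟩ _ ⟨⟨a', b'⟩, rfl⟩
    simp only [L.flip_tmul, T.inner_tmul]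
    ring

theorem flip_mem_unitary [CompleteSpace H2] (L : IsLegMaps τ m m' leg12 leg23 leg13 Sg)
    (T : IsTripleTensor τ m m') : Sg ∈ unitary (H2 →L[ℂ] H2) := by
  rw [Unitary.mem_iff, L.star_flip T, L.flip_mul_self T]
  exact ⟨rfl, rfl⟩

theorem leg12_flip_mul_self (L : IsLegMaps τ m m' leg12 leg23 leg13 Sg)
    (T : IsTripleTensor τ m m') : leg12 Sg * leg12 Sg = 1 := by
  rw [← L.leg12_mul T, L.flip_mul_self T, L.leg12_one T]

theorem leg13_one (L : IsLegMaps τ m m' leg12 leg23 leg13 Sg) (T : IsTripleTensor τ m m') :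
    leg13 1 = 1 := by
  rw [L.leg13_eq, L.leg23_one T, mul_one, L.leg12_flip_mul_self T]

theorem leg13_mul (L : IsLegMaps τ m m' leg12 leg23 leg13 Sg) (T : IsTripleTensor τ m m')
    (S S' : H2 →L[ℂ] H2) : leg13 (S * S') = leg13 S * leg13 S' := by
  simp only [L.leg13_eq, L.leg23_mul T, mul_assoc]
  rw [← mul_assoc (leg12 Sg) (leg12 Sg), L.leg12_flip_mul_self T, one_mul]

theorem star_leg13 [CompleteSpace H2] [CompleteSpace H3]
    (L : IsLegMaps τ m m' leg12 leg23 leg13 Sg) (T : IsTripleTensor τ m m') (S : H2 →L[ℂ] H2) :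
    star (leg13 S) = leg13 (star S) := by
  simp only [L.leg13_eq, star_mul, L.star_leg12 T, L.star_flip T, L.star_leg23 T, mul_assoc]

theorem leg12_mem_unitary [CompleteSpace H2] [CompleteSpace H3]
    (L : IsLegMaps τ m m' leg12 leg23 leg13 Sg) (T : IsTripleTensor τ m m') {U : H2 →L[ℂ] H2}
    (hU : U ∈ unitary (H2 →L[ℂ] H2)) : leg12 U ∈ unitary (H3 →L[ℂ] H3) :=
  mem_unitary_of_starMonoidHom leg12 (L.leg12_one T) (L.leg12_mul T)
    (fun S => (L.star_leg12 T S).symm) hU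

theorem leg23_mem_unitary [CompleteSpace H2] [CompleteSpace H3]
    (L : IsLegMaps τ m m' leg12 leg23 leg13 Sg) (T : IsTripleTensor τ m m') {U : H2 →L[ℂ] H2}
    (hU : U ∈ unitary (H2 →L[ℂ] H2)) : leg23 U ∈ unitary (H3 →L[ℂ] H3) :=
  mem_unitary_of_starMonoidHom leg23 (L.leg23_one T) (L.leg23_mul T)
    (fun S => (L.star_leg23 T S).symm) hU

theorem leg13_mem_unitary [CompleteSpace H2] [CompleteSpace H3]
    (L : IsLegMaps τ m m' leg12 leg23 leg13 Sg) (T : IsTripleTensor τ m m') {U : H2 →L[ℂ] H2}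
    (hU : U ∈ unitary (H2 →L[ℂ] H2)) : leg13 U ∈ unitary (H3 →L[ℂ] H3) :=
  mem_unitary_of_starMonoidHom leg13 (L.leg13_one T) (L.leg13_mul T)
    (fun S => (L.star_leg13 T S).symm) hU

theorem leg13_apply_tmul (L : IsLegMaps τ m m' leg12 leg23 leg13 Sg) (T : IsTripleTensor τ m m')
    (S : H2 →L[ℂ] H2) (a b c : H) : leg13 S (m (τ a b) c) = leg12 Sg (m' b (S (τ a c))) := by
  rw [L.leg13_eq, mul_apply_eq_comp, mul_apply_eq_comp, L.leg12_apply, L.flip_tmul, T.assoc,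
    L.leg23_apply]

theorem inner_leg12_flip_m' [CompleteSpace H2] [CompleteSpace H3]
    (L : IsLegMaps τ m m' leg12 leg23 leg13 Sg) (T : IsTripleTensor τ m m') (p a b c : H)
    (s : H2) : ⟪leg12 Sg (m' p s), m (τ a b) c⟫_ℂ = ⟪p, b⟫_ℂ * ⟪s, τ a c⟫_ℂ := by
  rw [← ContinuousLinearMap.adjoint_inner_right, ← ContinuousLinearMap.star_eq_adjoint,
    L.star_leg12 T, L.star_flip T, L.leg12_apply, L.flip_tmul, T.assoc, T.inner_m']

theorem norm_leg13_apply_sub [CompleteSpace H2] [CompleteSpace H3]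
    (L : IsLegMaps τ m m' leg12 leg23 leg13 Sg) (T : IsTripleTensor τ m m') (S : H2 →L[ℂ] H2)
    (a b c : H) :
    ‖leg13 S (m (τ a b) c) - m (τ a b) c‖ = ‖b‖ * ‖S (τ a c) - τ a c‖ := by
  have hflip : m (τ a b) c = leg12 Sg (m' b (τ a c)) := by
    rw [← T.assoc, L.leg12_apply, L.flip_tmul]
  rw [L.leg13_apply_tmul T, hflip, ← map_sub, ← map_sub,
    (leg12 Sg).norm_map_of_mem_unitary (L.leg12_mem_unitary T (L.flip_mem_unitary T)), T.norm_m']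

theorem norm_leg13_leg23_star_leg13_sub_le [CompleteSpace H2] [CompleteSpace H3]
    (L : IsLegMaps τ m m' leg12 leg23 leg13 Sg) (T : IsTripleTensor τ m m') {W : H2 →L[ℂ] H2}
    (hW : W ∈ unitary (H2 →L[ℂ] H2)) (W' : H2 →L[ℂ] H2) (a b c : H) :
    ‖(leg13 W * leg23 W * star (leg13 W')) (m (τ a b) c) - m (τ a b) c‖
      ≤ ‖b‖ * ‖(W * star W') (τ a c) - τ a c‖
        + ‖leg23 W (star (leg13 W') (m (τ a b) c)) - star (leg13 W') (m (τ a b) c)‖ := by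
  calc _ ≤ ‖leg13 W (star (leg13 W') (m (τ a b) c)) - m (τ a b) c‖
        + ‖leg23 W (star (leg13 W') (m (τ a b) c)) - star (leg13 W') (m (τ a b) c)‖ :=
        norm_apply_apply_sub_le (L.leg13_mem_unitary T hW) _ _
    _ = _ := by rw [← mul_apply_eq_comp, L.star_leg13 T, ← L.leg13_mul T, L.norm_leg13_apply_sub T]

theorem leg23_rightLeg_apply (L : IsLegMaps τ m m' leg12 leg23 leg13 Sg)
    (T : IsTripleTensor τ m m') {ρ : (H →L[ℂ] H) → (H2 →L[ℂ] H2)}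
    (hρ : ∀ (S : H →L[ℂ] H) (a b : H), ρ S (τ a b) = τ a (S b)) (S : H →L[ℂ] H) (u : H2) (c : H) :
    leg23 (ρ S) (m u c) = m u (S c) := by
  have h : (leg23 (ρ S)).comp (m.flip c) = m.flip (S c) :=
    T.ext₂ fun a b => by
      simp only [ContinuousLinearMap.comp_apply, ContinuousLinearMap.flip_apply, T.assoc,
        L.leg23_apply, hρ]
  simpa using congrArg (fun A => A u) h

theorem commute_leg12_of_amplify (L : IsLegMaps τ m m' leg12 leg23 leg13 Sg)
    (T : IsTripleTensor τ m m') {Φ : H3 →L[ℂ] H3} {S : H →L[ℂ] H}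
    (hΦ : ∀ u c, Φ (m u c) = m u (S c)) (R : H2 →L[ℂ] H2) : Commute Φ (leg12 R) :=
  T.ext₃ fun a b c => by simp only [mul_apply_eq_comp, L.leg12_apply, hΦ]

theorem inner_leg13_conj [CompleteSpace H2] [CompleteSpace H3]
    (L : IsLegMaps τ m m' leg12 leg23 leg13 Sg) (T : IsTripleTensor τ m m')
    {J Jh : H →ₗᵢ⋆[ℂ] H} (hJ : Function.Involutive J) {JJ JJh JhJ : H2 →ₗᵢ⋆[ℂ] H2}
    (hJJh : Function.Involutive JJh) (hJJ_tmul : ∀ a b, JJ (τ a b) = τ (J a) (J b))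
    (hJJh_tmul : ∀ a b, JJh (τ a b) = τ (J a) (Jh b))
    (hJhJ_tmul : ∀ a b, JhJ (τ a b) = τ (Jh a) (J b)) {W W' : H2 →L[ℂ] H2}
    (hW' : ∀ x, W' x = JJ (W (JJ x))) (a c : H) (z w : H2) :
    ⟪leg13 W' (m' a (JhJ z)), m (JJh w) c⟫_ℂ = ⟪m w (J c), leg13 W (m' (J a) z)⟫_ℂ :=
  inner_map_conj_eq_of_dense_span T.dense_tmul T.dense_tmul JhJ JJh hJJh
    ((leg13 W').comp (m' a)) (m.flip c) ((leg13 W).comp (m' (J a))) (m.flip (J c)) (by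
      rintro _ ⟨⟨p, q⟩, rfl⟩ _ ⟨⟨p', q'⟩, rfl⟩
      have hflip : τ (J p') c = JJ (τ p' (J c)) := by rw [hJJ_tmul, hJ]
      simp only [ContinuousLinearMap.comp_apply, ContinuousLinearMap.flip_apply, hJhJ_tmul,
        hJJh_tmul, ← T.assoc, L.leg13_apply_tmul T, L.inner_leg12_flip_m' T]
      rw [← inner_conj_symm (m _ _), L.inner_leg12_flip_m' T, map_mul, inner_conj_symm,
        inner_conj_symm, Jh.inner_map_map_conj, hW', hJJ_tmul, hJ, hflip,
        JJ.inner_map_map_conj]) z w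

theorem pentagon_conj [CompleteSpace H2] [CompleteSpace H3]
    (L : IsLegMaps τ m m' leg12 leg23 leg13 Sg) (T : IsTripleTensor τ m m')
    {J Jh : H →ₗᵢ⋆[ℂ] H} (hJ : Function.Involutive J) {JJ JJh JhJ : H2 →ₗᵢ⋆[ℂ] H2}
    (hJJh : Function.Involutive JJh) (hJhJ : Function.Involutive JhJ)
    (hJJ_tmul : ∀ a b, JJ (τ a b) = τ (J a) (J b))
    (hJJh_tmul : ∀ a b, JJh (τ a b) = τ (J a) (Jh b))
    (hJhJ_tmul : ∀ a b, JhJ (τ a b) = τ (Jh a) (J b)) {W W' W'' : H2 →L[ℂ] H2}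
    (hPent : leg12 W * leg13 W * leg23 W = leg23 W * leg12 W)
    (hWstar : ∀ x, star W x = JhJ (W (JhJ x))) (hW' : ∀ x, W' x = JJ (W (JJ x)))
    (hW'' : ∀ x, W'' x = JJh (W (JJh x))) :
    leg12 W'' * leg13 W' * leg23 (star W) = leg23 (star W) * leg12 W'' := by
  have hPent' : ∀ v, leg12 W (leg13 W (leg23 W v)) = leg23 W (leg12 W v) := fun v => by
    simpa only [mul_apply_eq_comp] using congrArg (fun A => A v) hPent
  have hW : ∀ x, W x = JhJ (star W (JhJ x)) := fun x => by rw [hWstar, hJhJ, hJhJ]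
  refine T.ext_inner₃ fun a b c a' b' c' => ?_
  simp only [mul_apply_eq_comp]
  calc ⟪leg12 W'' (leg13 W' (leg23 (star W) (m (τ a b) c))), m (τ a' b') c'⟫_ℂ
      = ⟪leg13 W' (m' a (JhJ (W (τ (Jh b) (J c))))),
          m (JJh (star W (τ (J a') (Jh b')))) c'⟫_ℂ := by
        rw [← ContinuousLinearMap.adjoint_inner_right, ← ContinuousLinearMap.star_eq_adjoint,
          L.star_leg12 T, L.leg12_apply, ContinuousLinearMap.star_apply_of_conj JJh hJJh hW'',
          hJJh_tmul, T.assoc, L.leg23_apply, hWstar, hJhJ_tmul]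
    _ = ⟪m (star W (τ (J a') (Jh b'))) (J c'), leg13 W (m' (J a) (W (τ (Jh b) (J c))))⟫_ℂ :=
        L.inner_leg13_conj T hJ hJJh hJJ_tmul hJJh_tmul hJhJ_tmul hW' _ _ _ _
    _ = ⟪leg12 (star W) (m (τ (J a') (Jh b')) (J c')),
          leg13 W (leg23 W (m (τ (J a) (Jh b)) (J c)))⟫_ℂ := by
        rw [L.leg12_apply, T.assoc (J a), L.leg23_apply]
    _ = ⟪m (τ (J a') (Jh b')) (J c'), leg23 W (leg12 W (m (τ (J a) (Jh b)) (J c)))⟫_ℂ := by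
        rw [← L.star_leg12 T, (leg12 W).star_eq_adjoint, ContinuousLinearMap.adjoint_inner_left,
          hPent']
    _ = ⟪leg23 (star W) (m (τ (J a') (Jh b')) (J c')), leg12 W (m (τ (J a) (Jh b)) (J c))⟫_ℂ := by
        rw [← L.star_leg23 T, (leg23 W).star_eq_adjoint, ContinuousLinearMap.adjoint_inner_left]
    _ = ⟪m' (J a') (star W (τ (Jh b') (J c'))), m (W (τ (J a) (Jh b))) (J c)⟫_ℂ := by
        rw [T.assoc (J a'), L.leg23_apply, L.leg12_apply]
    _ = ⟪m (JJh (W (τ (J a) (Jh b)))) c, m' a' (JhJ (star W (τ (Jh b') (J c'))))⟫_ℂ :=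
        (T.inner_m_conj_m' hJ hJhJ hJJh_tmul hJhJ_tmul _ _ _ _).symm
    _ = ⟪leg23 (star W) (leg12 W'' (m (τ a b) c)), m (τ a' b') c'⟫_ℂ := by
        rw [← L.star_leg23 T, (leg23 W).star_eq_adjoint, ContinuousLinearMap.adjoint_inner_left,
          L.leg12_apply, hW'', hJJh_tmul, T.assoc a', L.leg23_apply, hW (τ b' c'), hJhJ_tmul]

end IsLegMaps

end Tensor

theorem stmt_12_general
    {H H2 H3 : Type*}
    [NormedAddCommGroup H] [InnerProductSpace ℂ H] [CompleteSpace H]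
    [NormedAddCommGroup H2] [InnerProductSpace ℂ H2] [CompleteSpace H2]
    [NormedAddCommGroup H3] [InnerProductSpace ℂ H3] [CompleteSpace H3]
    -- the tensor map H × H → H ⊗ H = H2
    (τ : H →L[ℂ] H →L[ℂ] H2)
    (hτinner : ∀ a b c d : H, (inner ℂ (τ a b) (τ c d) : ℂ) = (inner ℂ a c : ℂ) * (inner ℂ b d : ℂ))
    (hτdense : Dense (Submodule.span ℂ (Set.range fun p : H × H => τ p.1 p.2) : Set H2))
    -- the tensor maps (H ⊗ H) × H → H ⊗ H ⊗ H = H3 and H × (H ⊗ H) → H ⊗ H ⊗ H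
    (m : H2 →L[ℂ] H →L[ℂ] H3)
    (m' : H →L[ℂ] H2 →L[ℂ] H3)
    (hmm' : ∀ a b c : H, m (τ a b) c = m' a (τ b c))
    (hminner : ∀ (u v : H2) (c d : H), (inner ℂ (m u c) (m v d) : ℂ) = (inner ℂ u v : ℂ) * (inner ℂ c d : ℂ))
    (hmdense : Dense (Submodule.span ℂ (Set.range fun p : (H × H) × H => m (τ p.1.1 p.1.2) p.2) : Set H3))
    -- the leg maps T ↦ T₁₂ = T ⊗ 1, T ↦ T₂₃ = 1 ⊗ T, T ↦ T₁₃ = (Σ⊗1)(1⊗T)(Σ⊗1)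
    (leg12 leg23 leg13 : (H2 →L[ℂ] H2) → (H3 →L[ℂ] H3))
    (hleg12 : ∀ (T : H2 →L[ℂ] H2) (u : H2) (c : H), leg12 T (m u c) = m (T u) c)
    (hleg23 : ∀ (T : H2 →L[ℂ] H2) (a : H) (v : H2), leg23 T (m' a v) = m' a (T v))
    -- the flip unitary Σ on H ⊗ H
    (Sg : H2 →L[ℂ] H2)
    (hSg : ∀ a b : H, Sg (τ a b) = τ b a)
    (hleg13 : ∀ T : H2 →L[ℂ] H2, leg13 T = leg12 Sg * leg23 T * leg12 Sg)
    -- the multiplicative unitary W, satisfying the pentagonal equation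
    (W : H2 →L[ℂ] H2)
    (hWl : W * star W = 1) (hWr : star W * W = 1)
    (hPent : leg12 W * leg13 W * leg23 W = leg23 W * leg12 W)
    -- J : a conjugate-linear isometric involution of H
    (J : H → H)
    (hJadd : ∀ x y : H, J (x + y) = J x + J y)
    (hJsmul : ∀ (c : ℂ) (x : H), J (c • x) = (starRingEnd ℂ) c • J x)
    (hJnorm : ∀ x : H, ‖J x‖ = ‖x‖)
    (hJinv : ∀ x : H, J (J x) = x)
    -- Jh : a conjugate-linear isometric involution of H
    (Jh : H → H)
    (hJhadd : ∀ x y : H, Jh (x + y) = Jh x + Jh y)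
    (hJhsmul : ∀ (c : ℂ) (x : H), Jh (c • x) = (starRingEnd ℂ) c • Jh x)
    (hJhnorm : ∀ x : H, ‖Jh x‖ = ‖x‖)
    -- JJ : the conjugate-linear involution J⊗J of H ⊗ H
    (JJ : H2 → H2)
    (hJJadd : ∀ x y : H2, JJ (x + y) = JJ x + JJ y)
    (hJJsmul : ∀ (c : ℂ) (x : H2), JJ (c • x) = (starRingEnd ℂ) c • JJ x)
    (hJJnorm : ∀ x : H2, ‖JJ x‖ = ‖x‖)
    (hJJinv : ∀ x : H2, JJ (JJ x) = x)
    (hJJtmul : ∀ a b : H, JJ (τ a b) = τ (J a) (J b))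
    -- JJh : the conjugate-linear involution J⊗Ĵ of H ⊗ H
    (JJh : H2 → H2)
    (hJJhadd : ∀ x y : H2, JJh (x + y) = JJh x + JJh y)
    (hJJhsmul : ∀ (c : ℂ) (x : H2), JJh (c • x) = (starRingEnd ℂ) c • JJh x)
    (hJJhnorm : ∀ x : H2, ‖JJh x‖ = ‖x‖)
    (hJJhinv : ∀ x : H2, JJh (JJh x) = x)
    (hJJhtmul : ∀ a b : H, JJh (τ a b) = τ (J a) (Jh b))
    -- JhJ : the conjugate-linear involution Ĵ⊗J of H ⊗ H
    (JhJ : H2 → H2)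
    (hJhJadd : ∀ x y : H2, JhJ (x + y) = JhJ x + JhJ y)
    (hJhJsmul : ∀ (c : ℂ) (x : H2), JhJ (c • x) = (starRingEnd ℂ) c • JhJ x)
    (hJhJnorm : ∀ x : H2, ‖JhJ x‖ = ‖x‖)
    (hJhJinv : ∀ x : H2, JhJ (JhJ x) = x)
    (hJhJtmul : ∀ a b : H, JhJ (τ a b) = τ (Jh a) (J b))
    -- the assumption W* = (Ĵ⊗J) W (Ĵ⊗J)
    (hWstar : ∀ x : H2, (star W) x = JhJ (W (JhJ x)))
    -- W' = (J⊗J) W (J⊗J), the commutant multiplicative unitary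
    (W' : H2 →L[ℂ] H2)
    (hW' : ∀ x : H2, W' x = JJ (W (JJ x)))
    -- W'' = (J⊗Ĵ) W (J⊗Ĵ) (in the quantum group setting, W'' = (W'ᵒᵖ)*)
    (W'' : H2 →L[ℂ] H2)
    (hW'' : ∀ x : H2, W'' x = JJh (W (JJh x)))
    -- the right leg map T ↦ 1 ⊗ T on H ⊗ H
    (ρ : (H →L[ℂ] H) → (H2 →L[ℂ] H2))
    (hρ : ∀ (T : H →L[ℂ] H) (a b : H), ρ T (τ a b) = τ a (T b))
    -- W₁₃ commutes with W''₁₂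
    (hcomm : Commute (leg13 W) (leg12 W''))
    -- a bounded operator X on H and unit vectors ξ, η, ζ
    (X : H →L[ℂ] H)
    (ξ η ζ : H) (hξ : ‖ξ‖ = 1) (hη : ‖η‖ = 1) (hζ : ‖ζ‖ = 1) :
    ‖(inner ℂ (leg23 (ρ X) ((leg23 W * leg12 W * leg12 W'') (m (τ ξ η) ζ)))
          ((leg23 W * leg12 W * leg12 W'') (m (τ ξ η) ζ)) : ℂ)
        - (inner ℂ (X ζ) ζ : ℂ)‖ ≤
      2 * ‖X‖ * (‖(W * star W') (τ ξ ζ) - τ ξ ζ‖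
        + ‖leg23 W (star (leg13 W') (m (τ ξ η) ζ)) - star (leg13 W') (m (τ ξ η) ζ)‖) := by
  let J' : H →ₗᵢ⋆[ℂ] H := ⟨⟨⟨J, hJadd⟩, hJsmul⟩, hJnorm⟩
  let Jh' : H →ₗᵢ⋆[ℂ] H := ⟨⟨⟨Jh, hJhadd⟩, hJhsmul⟩, hJhnorm⟩
  let JJ' : H2 →ₗᵢ⋆[ℂ] H2 := ⟨⟨⟨JJ, hJJadd⟩, hJJsmul⟩, hJJnorm⟩
  let JJh' : H2 →ₗᵢ⋆[ℂ] H2 := ⟨⟨⟨JJh, hJJhadd⟩, hJJhsmul⟩, hJJhnorm⟩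
  let JhJ' : H2 →ₗᵢ⋆[ℂ] H2 := ⟨⟨⟨JhJ, hJhJadd⟩, hJhJsmul⟩, hJhJnorm⟩
  have T : IsTripleTensor τ m m' := ⟨hτinner, hτdense, hmm', hminner, hmdense⟩
  have L : IsLegMaps τ m m' leg12 leg23 leg13 Sg := ⟨hleg12, hleg23, hSg, hleg13⟩
  have uW : W ∈ unitary (H2 →L[ℂ] H2) := ⟨hWr, hWl⟩
  have uW' := ContinuousLinearMap.mem_unitary_of_conj JJ' hJJinv uW hW'
  have uW'' := ContinuousLinearMap.mem_unitary_of_conj JJh' hJJhinv uW hW''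
  have hconj := L.pentagon_conj T (J := J') (Jh := Jh') (JJ := JJ') (JJh := JJh') (JhJ := JhJ')
    hJinv hJJhinv hJhJinv hJJtmul hJJhtmul hJhJtmul hPent hWstar hW' hW''
  have hfactor : leg23 W * leg12 W * leg12 W''
      = leg12 W * leg12 W'' * (leg13 W * leg23 W * star (leg13 W')) :=
    mul_mul_eq_of_pentagon (L.leg23_mem_unitary T uW) (L.leg13_mem_unitary T uW') hPent
      (by rwa [L.star_leg23 T]) hcomm
  have hρX := L.leg23_rightLeg_apply T hρ
  have hv : ‖m (τ ξ η) ζ‖ = 1 := by rw [T.norm_m_tmul, hξ, hη, hζ, one_mul, one_mul]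
  have hXζ : ⟪X ζ, ζ⟫_ℂ = ⟪leg23 (ρ X) (m (τ ξ η) ζ), m (τ ξ η) ζ⟫_ℂ := by
    rw [hρX, T.inner_m_tmul, inner_self_eq_norm_sq_to_K, inner_self_eq_norm_sq_to_K, hξ, hη]
    simp
  rw [hfactor, mul_apply_eq_comp, hXζ]
  calc _ ≤ 2 * ‖leg23 (ρ X)‖
        * ‖(leg13 W * leg23 W * star (leg13 W')) (m (τ ξ η) ζ) - m (τ ξ η) ζ‖ :=
        norm_inner_unitary_conj_sub_le
          (mul_mem (L.leg12_mem_unitary T uW) (L.leg12_mem_unitary T uW''))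
          ((L.commute_leg12_of_amplify T (hρX X) W).mul_right
            (L.commute_leg12_of_amplify T (hρX X) W''))
          (mul_mem (mul_mem (L.leg13_mem_unitary T uW) (L.leg23_mem_unitary T uW))
            (Unitary.star_mem (L.leg13_mem_unitary T uW'))) hv
    _ ≤ _ := by
        gcongr
        · exact T.norm_amplify_le (Φ := fun S => leg23 (ρ S)) hρX X
        · simpa [hη] using L.norm_leg13_leg23_star_leg13_sub_le T uW W' ξ η ζ

theorem stmt_12
    {H H2 H3 : Type*}
    [NormedAddCommGroup H] [InnerProductSpace ℂ H] [CompleteSpace H]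
    [NormedAddCommGroup H2] [InnerProductSpace ℂ H2] [CompleteSpace H2]
    [NormedAddCommGroup H3] [InnerProductSpace ℂ H3] [CompleteSpace H3]
    -- the tensor map H × H → H ⊗ H = H2
    (τ : H →L[ℂ] H →L[ℂ] H2)
    (hτinner : ∀ a b c d : H, (inner ℂ (τ a b) (τ c d) : ℂ) = (inner ℂ a c : ℂ) * (inner ℂ b d : ℂ))
    (hτdense : Dense (Submodule.span ℂ (Set.range fun p : H × H => τ p.1 p.2) : Set H2))
    -- the tensor maps (H ⊗ H) × H → H ⊗ H ⊗ H = H3 and H × (H ⊗ H) → H ⊗ H ⊗ H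
    (m : H2 →L[ℂ] H →L[ℂ] H3)
    (m' : H →L[ℂ] H2 →L[ℂ] H3)
    (hmm' : ∀ a b c : H, m (τ a b) c = m' a (τ b c))
    (hminner : ∀ (u v : H2) (c d : H), (inner ℂ (m u c) (m v d) : ℂ) = (inner ℂ u v : ℂ) * (inner ℂ c d : ℂ))
    (hmdense : Dense (Submodule.span ℂ (Set.range fun p : (H × H) × H => m (τ p.1.1 p.1.2) p.2) : Set H3))
    -- the leg maps T ↦ T₁₂ = T ⊗ 1, T ↦ T₂₃ = 1 ⊗ T, T ↦ T₁₃ = (Σ⊗1)(1⊗T)(Σ⊗1)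
    (leg12 leg23 leg13 : (H2 →L[ℂ] H2) → (H3 →L[ℂ] H3))
    (hleg12 : ∀ (T : H2 →L[ℂ] H2) (u : H2) (c : H), leg12 T (m u c) = m (T u) c)
    (hleg23 : ∀ (T : H2 →L[ℂ] H2) (a : H) (v : H2), leg23 T (m' a v) = m' a (T v))
    -- the flip unitary Σ on H ⊗ H
    (Sg : H2 →L[ℂ] H2)
    (hSg : ∀ a b : H, Sg (τ a b) = τ b a)
    (hleg13 : ∀ T : H2 →L[ℂ] H2, leg13 T = leg12 Sg * leg23 T * leg12 Sg)
    -- the multiplicative unitary W, satisfying the pentagonal equation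
    (W : H2 →L[ℂ] H2)
    (hWl : W * star W = 1) (hWr : star W * W = 1)
    (hPent : leg12 W * leg13 W * leg23 W = leg23 W * leg12 W)
    -- J : a conjugate-linear isometric involution of H
    (J : H → H)
    (hJadd : ∀ x y : H, J (x + y) = J x + J y)
    (hJsmul : ∀ (c : ℂ) (x : H), J (c • x) = (starRingEnd ℂ) c • J x)
    (hJnorm : ∀ x : H, ‖J x‖ = ‖x‖)
    (hJinv : ∀ x : H, J (J x) = x)
    -- Jh : a conjugate-linear isometric involution of H
    (Jh : H → H)
    (hJhadd : ∀ x y : H, Jh (x + y) = Jh x + Jh y)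
    (hJhsmul : ∀ (c : ℂ) (x : H), Jh (c • x) = (starRingEnd ℂ) c • Jh x)
    (hJhnorm : ∀ x : H, ‖Jh x‖ = ‖x‖)
    (hJhinv : ∀ x : H, Jh (Jh x) = x)
    -- JJ : the conjugate-linear involution J⊗J of H ⊗ H
    (JJ : H2 → H2)
    (hJJadd : ∀ x y : H2, JJ (x + y) = JJ x + JJ y)
    (hJJsmul : ∀ (c : ℂ) (x : H2), JJ (c • x) = (starRingEnd ℂ) c • JJ x)
    (hJJnorm : ∀ x : H2, ‖JJ x‖ = ‖x‖)
    (hJJinv : ∀ x : H2, JJ (JJ x) = x)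
    (hJJtmul : ∀ a b : H, JJ (τ a b) = τ (J a) (J b))
    -- JJh : the conjugate-linear involution J⊗Ĵ of H ⊗ H
    (JJh : H2 → H2)
    (hJJhadd : ∀ x y : H2, JJh (x + y) = JJh x + JJh y)
    (hJJhsmul : ∀ (c : ℂ) (x : H2), JJh (c • x) = (starRingEnd ℂ) c • JJh x)
    (hJJhnorm : ∀ x : H2, ‖JJh x‖ = ‖x‖)
    (hJJhinv : ∀ x : H2, JJh (JJh x) = x)
    (hJJhtmul : ∀ a b : H, JJh (τ a b) = τ (J a) (Jh b))
    -- JhJ : the conjugate-linear involution Ĵ⊗J of H ⊗ H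
    (JhJ : H2 → H2)
    (hJhJadd : ∀ x y : H2, JhJ (x + y) = JhJ x + JhJ y)
    (hJhJsmul : ∀ (c : ℂ) (x : H2), JhJ (c • x) = (starRingEnd ℂ) c • JhJ x)
    (hJhJnorm : ∀ x : H2, ‖JhJ x‖ = ‖x‖)
    (hJhJinv : ∀ x : H2, JhJ (JhJ x) = x)
    (hJhJtmul : ∀ a b : H, JhJ (τ a b) = τ (Jh a) (J b))
    -- the assumption W* = (Ĵ⊗J) W (Ĵ⊗J)
    (hWstar : ∀ x : H2, (star W) x = JhJ (W (JhJ x)))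
    -- W' = (J⊗J) W (J⊗J), the commutant multiplicative unitary
    (W' : H2 →L[ℂ] H2)
    (hW' : ∀ x : H2, W' x = JJ (W (JJ x)))
    -- W'' = (J⊗Ĵ) W (J⊗Ĵ) (in the quantum group setting, W'' = (W'ᵒᵖ)*)
    (W'' : H2 →L[ℂ] H2)
    (hW'' : ∀ x : H2, W'' x = JJh (W (JJh x)))
    -- the right leg map T ↦ 1 ⊗ T on H ⊗ H
    (ρ : (H →L[ℂ] H) → (H2 →L[ℂ] H2))
    (hρ : ∀ (T : H →L[ℂ] H) (a b : H), ρ T (τ a b) = τ a (T b))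
    -- W₁₃ commutes with W''₁₂
    (hcomm : Commute (leg13 W) (leg12 W''))
    -- a bounded operator X on H and unit vectors ξ, η, ζ
    (X : H →L[ℂ] H)
    (ξ η ζ : H) (hξ : ‖ξ‖ = 1) (hη : ‖η‖ = 1) (hζ : ‖ζ‖ = 1) :
    ‖(inner ℂ (leg23 (ρ X) ((leg23 W * leg12 W * leg12 W'') (m (τ ξ η) ζ)))
          ((leg23 W * leg12 W * leg12 W'') (m (τ ξ η) ζ)) : ℂ)
        - (inner ℂ (X ζ) ζ : ℂ)‖ ≤
      2 * ‖X‖ * (‖(W * star W') (τ ξ ζ) - τ ξ ζ‖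
        + ‖leg23 W (star (leg13 W') (m (τ ξ η) ζ)) - star (leg13 W') (m (τ ξ η) ζ)‖) :=
  stmt_12_general τ hτinner hτdense m m' hmm' hminner hmdense leg12 leg23 leg13 hleg12 hleg23 Sg hSg
    hleg13 W hWl hWr hPent J hJadd hJsmul hJnorm hJinv Jh hJhadd hJhsmul hJhnorm JJ hJJadd hJJsmul
    hJJnorm hJJinv hJJtmul JJh hJJhadd hJJhsmul hJJhnorm hJJhinv hJJhtmul JhJ hJhJadd hJhJsmul
    hJhJnorm hJhJinv hJhJtmul hWstar W' hW' W'' hW'' ρ hρ hcomm X ξ η ζ hξ hη hζ
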